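/- Let k be a field of characteristic zero with α, β ∈ k satisfying α² + β² = -3. Define the 4×4 matrices R = [[0,-1,0,0],[1,-1,0,0],[0,0,0,-1],[0,0,1,-1]] and S = [[0,1,0,0],[1,0,0,0],[0,0,(α-1)/β,(-α-1)/β],[0,0,-2/β,(-α+1)/β]] over k (assuming β ≠ 0). Then R³ = I, S⁴ = I, and S R S⁻¹ = R⁻¹; in particular ⟨R, S⟩ ≤ GL₄(k) is a quotient of the dicyclic group of order 12. -/
import Mathlib

set_option maxHeartbeats 1000000


/-- Let `k` be a field of characteristic zero with `α, β ∈ k` (`β ≠ 0`) satisfying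
`α² + β² = -3`.  The matrices `R` and `S` below satisfy the dicyclic relations
`R³ = 1`, `S⁴ = 1`, `S R S⁻¹ = R⁻¹`, so `⟨R, S⟩ ≤ GL₄(k)` is a quotient of `Dic₁₂`. -/
theorem stmt7 (k : Type*) [Field k] [CharZero k]
    (α β : k) (hβ : β ≠ 0) (h : α ^ 2 + β ^ 2 = -3)
    (R S : Matrix (Fin 4) (Fin 4) k)
    (hR : R = !![0, -1, 0, 0; 1, -1, 0, 0; 0, 0, 0, -1; 0, 0, 1, -1])
    (hS : S = !![0, 1, 0, 0; 1, 0, 0, 0;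
      0, 0, (α - 1) / β, (-α - 1) / β; 0, 0, -2 / β, (-α + 1) / β]) :
    R ^ 3 = 1 ∧ S ^ 4 = 1 ∧ S * R * S⁻¹ = R⁻¹ := by
  have hR2 : R * R = !![-1, 1, 0, 0; -1, 0, 0, 0; 0, 0, -1, 1; 0, 0, -1, 0] := by
    rw [hR]
    ext i j
    fin_cases i <;> fin_cases j <;>
      simp [Matrix.mul_apply, Fin.sum_univ_four, Matrix.vecHead, Matrix.vecTail]
  have hR3 : R ^ 3 = 1 := by
    rw [pow_succ, pow_succ, pow_one, hR2, hR]
    ext i j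
    fin_cases i <;> fin_cases j <;>
      simp [Matrix.mul_apply, Fin.sum_univ_four, Matrix.vecHead, Matrix.vecTail,
        Matrix.one_apply]
  have hS2 : S * S = !![1, 0, 0, 0; 0, 1, 0, 0; 0, 0, -1, 0; 0, 0, 0, -1] := by
    rw [hS]
    ext i j
    fin_cases i <;> fin_cases j <;>
      · simp [Matrix.mul_apply, Fin.sum_univ_four, Matrix.vecHead, Matrix.vecTail]
        try field_simp
        try first
          | ring1
          | linear_combination -h
          | linear_combination (β ^ 2 - 1) * h
          | linear_combination (β * β) * h
          | linear_combination -((β * β) * h)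
          | linear_combination h
  have hS4 : S ^ 4 = 1 := by
    have e : S ^ 4 = (S * S) * (S * S) := by
      rw [pow_succ, pow_succ, pow_succ, pow_one, mul_assoc]
    rw [e, hS2]
    ext i j
    fin_cases i <;> fin_cases j <;>
      simp [Matrix.mul_apply, Fin.sum_univ_four, Matrix.vecHead, Matrix.vecTail,
        Matrix.one_apply]
  refine ⟨hR3, hS4, ?_⟩
  have hRinv : R⁻¹ = R * R := by
    apply Matrix.inv_eq_right_inv
    have e : R * (R * R) = R ^ 3 := by noncomm_ring
    rw [e]; exact hR3
  have hSinv : S⁻¹ = S * S * S := by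
    apply Matrix.inv_eq_right_inv
    have e : S * (S * S * S) = S ^ 4 := by noncomm_ring
    rw [e]; exact hS4
  have hSR : S * R = (R * R) * S := by
    rw [hR2, hR, hS]
    ext i j
    fin_cases i <;> fin_cases j <;>
      · simp [Matrix.mul_apply, Fin.sum_univ_four, Matrix.vecHead, Matrix.vecTail]
        try ring
  rw [hSinv, hRinv, hSR]
  have e : R * R * S * (S * S * S) = R * R * (S ^ 4) := by
    rw [pow_succ, pow_succ, pow_succ, pow_one]
    noncomm_ring
  rw [e, hS4, mul_one]
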